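/- arXiv:math/0601172 — 2 statements merged into one kernel-verified Lean document; each statement's English description precedes it below -/
import Mathlib

section
/- Every connected finite graph G has a connected dominating set D and an independent set S with S ⊆ D such that |D| = 2|S| - 1. -/
open SimpleGraph

/-- A set of vertices is independent: no two of its vertices are adjacent. -/
def IsIndepSet {V : Type*} (G : SimpleGraph V) (s : Set V) : Prop :=
  s.Pairwise fun a b => ¬ G.Adj a b

/-- The independence number of a graph. -/
noncomputable def indepNum {V : Type*} [Fintype V] (G : SimpleGraph V) : ℕ :=
  sSup {n | ∃ s : Finset V, _root_.IsIndepSet G ↑s ∧ s.card = n}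

/-- A set of vertices is connected if it induces a connected subgraph. -/
def IsConnSet {V : Type*} (G : SimpleGraph V) (s : Set V) : Prop :=
  (G.induce s).Connected

/-- A set of vertices is dominating if every vertex outside it has a neighbour in it. -/
def IsDomSet {V : Type*} (G : SimpleGraph V) (s : Set V) : Prop :=
  ∀ v ∉ s, ∃ u ∈ s, G.Adj u v

/-- `G` has a `K_n`-minor, witnessed by `n` pairwise disjoint nonempty connected
branch sets with an edge between each pair. -/
def HasCliqueMinor {V : Type*} (G : SimpleGraph V) (n : ℕ) : Prop :=
  ∃ B : Fin n → Set V,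
    (∀ i, (B i).Nonempty) ∧
    (∀ i, IsConnSet G (B i)) ∧
    (Pairwise fun i j => Disjoint (B i) (B j)) ∧
    (Pairwise fun i j => ∃ u ∈ B i, ∃ v ∈ B j, G.Adj u v)

/-- The Hadwiger number: the largest `n` such that `K_n` is a minor of `G`. -/
noncomputable def hadwigerNum {V : Type*} [Fintype V] (G : SimpleGraph V) : ℕ :=
  sSup {n | HasCliqueMinor G n}

/-! Grow a connected set `D` together with an independent set `S ⊆ D` with `|D| = 2|S| - 1`,
starting from a single vertex. While `D` is not dominating, connectivity of `G` gives an edge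
`w v` leaving the closed neighbourhood of `D`; then `w` has a neighbour in `D`, and `v` has none,
so adding `w, v` to `D` and `v` to `S` keeps both invariants and gains two vertices of `D` for one
of `S`. -/

section

variable {V : Type*} {G : SimpleGraph V}

lemma isConnSet_singleton (v : V) : IsConnSet G {v} := by
  rw [IsConnSet, induce_singleton_eq_top]
  exact connected_top

lemma IsConnSet.insert {s : Set V} {u v : V} (hs : IsConnSet G s) (hu : u ∈ s)
    (huv : G.Adj u v) : IsConnSet G (insert v s) := by
  have := G.connected_induce_union hs.preconnected (isConnSet_singleton (G := G) v).preconnected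
    hu (Set.mem_singleton v) huv
  rwa [Set.union_singleton] at this

lemma IsIndepSet.insert {s : Set V} {v : V} (hs : _root_.IsIndepSet G s)
    (hv : ∀ u ∈ s, ¬ G.Adj u v) : _root_.IsIndepSet G (insert v s) :=
  Set.pairwise_insert.mpr ⟨hs, fun u hu _ => ⟨fun h => hv u hu h.symm, hv u hu⟩⟩

lemma SimpleGraph.Connected.exists_adj_adj_of_not_isDomSet (hG : G.Connected) {D : Set V}
    (hD : D.Nonempty) (hdom : ¬ IsDomSet G D) :
    ∃ u ∈ D, ∃ w v, G.Adj u w ∧ G.Adj w v ∧ v ∉ D ∧ ∀ x ∈ D, ¬ G.Adj x v := by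
  obtain ⟨d, hd⟩ := hD
  obtain ⟨y, hyD, hy⟩ : ∃ y ∉ D, ∀ x ∈ D, ¬ G.Adj x y := by
    simpa [IsDomSet] using hdom
  let N : Set V := {z | z ∈ D ∨ ∃ x ∈ D, G.Adj x z}
  obtain ⟨p⟩ := hG d y
  obtain ⟨⟨⟨w, v⟩, hwv⟩, -, hw, hv⟩ :=
    p.exists_boundary_dart N (Or.inl hd) (by simpa [N] using ⟨hyD, hy⟩)
  simp only [N, Set.mem_ofPred_eq, not_or, not_exists, not_and] at hw hv
  obtain ⟨hvD, hv⟩ := hv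
  rcases hw with hwD | ⟨u, huD, huw⟩
  · exact absurd hwv (hv w hwD)
  · exact ⟨u, huD, w, v, huw, hwv, hvD, hv⟩

def IsGrowingPair (G : SimpleGraph V) (D S : Finset V) : Prop :=
  S ⊆ D ∧ IsConnSet G ↑D ∧ _root_.IsIndepSet G ↑S ∧ D.card + 1 = 2 * S.card

lemma isGrowingPair_singleton (v : V) : IsGrowingPair G {v} {v} := by
  refine ⟨subset_rfl, ?_, ?_, rfl⟩
  · simpa using isConnSet_singleton (G := G) v
  · simp [_root_.IsIndepSet]

variable [DecidableEq V]

lemma SimpleGraph.Connected.exists_isGrowingPair_card_lt (hG : G.Connected) {D S : Finset V}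
    (h : IsGrowingPair G D S) (hdom : ¬ IsDomSet G ↑D) :
    ∃ D' S', IsGrowingPair G D' S' ∧ D.card < D'.card := by
  obtain ⟨hSD, hconn, hind, hcard⟩ := h
  have hD : (D : Set V).Nonempty := Finset.coe_nonempty.mpr (Finset.card_pos.mp (by omega))
  obtain ⟨u, hu, w, v, huw, hwv, hvD, hv⟩ := hG.exists_adj_adj_of_not_isDomSet hD hdom
  have hwD : w ∉ D := fun hw => hv w hw hwv
  have hvw : v ∉ insert w D := by
    simpa [Finset.mem_insert, hwv.ne'] using hvD
  refine ⟨insert v (insert w D), insert v S, ⟨?_, ?_, ?_, ?_⟩, ?_⟩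
  · exact Finset.insert_subset_insert v (hSD.trans (Finset.subset_insert w D))
  · simpa using (hconn.insert hu huw).insert (Set.mem_insert w _) hwv
  · simpa using hind.insert fun x hx => hv x (hSD hx)
  · rw [Finset.card_insert_of_notMem hvw, Finset.card_insert_of_notMem hwD,
      Finset.card_insert_of_notMem fun hvS => hvD (hSD hvS)]
    omega
  · rw [Finset.card_insert_of_notMem hvw, Finset.card_insert_of_notMem hwD]
    omega

lemma SimpleGraph.Connected.exists_isGrowingPair_isDomSet [Fintype V] (hG : G.Connected)
    {D S : Finset V} (h : IsGrowingPair G D S) :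
    ∃ D' S', IsGrowingPair G D' S' ∧ IsDomSet G ↑D' := by
  induction hk : Fintype.card V - D.card using Nat.strong_induction_on generalizing D S with
  | _ k ih =>
    by_cases hdom : IsDomSet G ↑D
    · exact ⟨D, S, h, hdom⟩
    obtain ⟨D', S', h', hlt⟩ := hG.exists_isGrowingPair_card_lt h hdom
    have := D'.card_le_univ
    exact ih _ (by omega) h' rfl

end

theorem stmt_0 {V : Type*} [Fintype V] (G : SimpleGraph V) (hG : G.Connected) :
    ∃ D S : Finset V, S ⊆ D ∧ IsConnSet G ↑D ∧ IsDomSet G ↑D ∧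
      _root_.IsIndepSet G ↑S ∧ D.card = 2 * S.card - 1 := by
  classical
  obtain ⟨v⟩ := hG.nonempty
  obtain ⟨D, S, ⟨hSD, hconn, hind, hcard⟩, hdom⟩ :=
    hG.exists_isGrowingPair_isDomSet (isGrowingPair_singleton (G := G) v)
  exact ⟨D, S, hSD, hconn, hdom, hind, by omega⟩
end

section
/- Every finite connected graph G has an independent set S and a connected set D ⊇ S with |D| = 2|S| − 1 and D dominating; consequently α(G) ≥ (γ_c(G) + 1)/2, where γ_c(G) is the minimum size of a connected dominating set. -/
open SimpleGraph

/-- The connected domination number of a graph. -/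
noncomputable def connDomNum {V : Type*} [Fintype V] (G : SimpleGraph V) : ℕ :=
  sInf {n | ∃ D : Finset V, IsConnSet G ↑D ∧ IsDomSet G ↑D ∧ D.card = n}

lemma grow_aux {V : Type*} [Fintype V] (G : SimpleGraph V) (hG : G.Connected) :
    ∀ (n : ℕ) (S D : Finset V), Fintype.card V ≤ D.card + n →
      _root_.IsIndepSet G ↑S → S ⊆ D → IsConnSet G ↑D → D.card + 1 = 2 * S.card →
      ∃ S' D' : Finset V, _root_.IsIndepSet G ↑S' ∧ S' ⊆ D' ∧ IsConnSet G ↑D' ∧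
        IsDomSet G ↑D' ∧ D'.card + 1 = 2 * S'.card := by
  intro n
  induction n with
  | zero =>
    intro S D hn hind hSD hconn hcard
    have hD : D = Finset.univ := Finset.eq_univ_of_card _
      (le_antisymm (Finset.card_le_univ D) (by simpa using hn))
    exact ⟨S, D, hind, hSD, hconn, fun v hv => absurd (hD ▸ Finset.mem_univ v) hv, hcard⟩
  | succ n ih =>
    intro S D hn hind hSD hconn hcard
    classical
    by_cases hdom : IsDomSet G ↑D
    · exact ⟨S, D, hind, hSD, hconn, hdom, hcard⟩
    simp only [IsDomSet, not_forall] at hdom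
    push_neg at hdom
    obtain ⟨v, hvD, hvadj⟩ := hdom
    have hDne : D.Nonempty := by
      rcases Finset.eq_empty_or_nonempty D with h | h
      · exfalso
        have : S = ∅ := Finset.subset_empty.mp (h ▸ hSD)
        simp [h, this] at hcard
      · exact h
    obtain ⟨d, hd⟩ := hDne
    obtain ⟨p⟩ := hG d v
    set A : Set V := ↑D ∪ {x | ∃ u ∈ D, G.Adj u x} with hA
    have hdA : d ∈ A := Or.inl hd
    have hvA : v ∉ A := by
      rintro (h | ⟨u, hu, hadj⟩)
      · exact hvD h
      · exact hvadj u hu hadj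
    obtain ⟨dart, _, hfst, hsnd⟩ := p.exists_boundary_dart A hdA hvA
    set m := dart.fst with hm
    set w := dart.snd with hw
    have hadj : G.Adj m w := dart.adj
    have hwD : w ∉ D := fun h => hsnd (Or.inl (Finset.mem_coe.mpr h))
    have hwN : ∀ u ∈ D, ¬ G.Adj u w := fun u hu ha => hsnd (Or.inr ⟨u, hu, ha⟩)
    have hmD : m ∉ D := by
      intro h
      exact hwN m h hadj
    obtain ⟨u, huD, humadj⟩ : ∃ u ∈ D, G.Adj u m := by
      rcases hfst with h | h
      · exact absurd (Finset.mem_coe.mp h) hmD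
      · exact h
    have hmw : m ≠ w := G.ne_of_adj hadj
    have hwS : w ∉ S := fun h => hwD (hSD h)
    -- new sets
    set S' := insert w S with hS'
    set D' := insert m (insert w D) with hD'
    have hindep' : _root_.IsIndepSet G ↑S' := by
      rw [hS', Finset.coe_insert]
      refine (haveI : Std.Symm fun a b => ¬ G.Adj a b := ⟨fun a b h ha => h ha.symm⟩; Set.pairwise_insert_of_symmetric (r := fun a b => ¬ G.Adj a b)).mpr ⟨hind, ?_⟩
      intro b hb _
      exact fun ha => hwN b (hSD hb) ha.symm
    have hsub' : S' ⊆ D' := by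
      intro x hx
      rcases Finset.mem_insert.mp hx with rfl | hx
      · exact Finset.mem_insert_of_mem (Finset.mem_insert_self _ _)
      · exact Finset.mem_insert_of_mem (Finset.mem_insert_of_mem (hSD hx))
    have hconn' : IsConnSet G ↑D' := by
      have heq : (↑D' : Set V) = ↑D ∪ {m, w} := by
        ext x
        simp only [hD', Finset.coe_insert, Set.mem_insert_iff, Finset.mem_coe,
          Set.mem_union, Set.mem_singleton_iff]
        tauto
      rw [IsConnSet, heq]
      exact connected_induce_union (Connected.preconnected hconn) (induce_pair_connected_of_adj hadj).preconnected
        huD (Set.mem_insert m _) humadj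
    have hcardD' : D'.card = D.card + 2 := by
      rw [hD', Finset.card_insert_of_notMem, Finset.card_insert_of_notMem hwD]
      simp only [Finset.mem_insert]
      push_neg
      exact ⟨hmw, hmD⟩
    have hcardS' : S'.card = S.card + 1 := Finset.card_insert_of_notMem hwS
    exact ih S' D' (by omega) hindep' hsub' hconn' (by omega)

theorem stmt_9 {V : Type*} [Fintype V] (G : SimpleGraph V) (hG : G.Connected) :
    (∃ S D : Finset V, _root_.IsIndepSet G ↑S ∧ S ⊆ D ∧ IsConnSet G ↑D ∧ IsDomSet G ↑D ∧
        D.card = 2 * S.card - 1) ∧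
      (connDomNum G + 1 : ℝ) / 2 ≤ (_root_.indepNum G : ℝ) := by
  obtain ⟨v⟩ := hG.nonempty
  have hsing : IsConnSet G ↑({v} : Finset V) := by
    rw [IsConnSet, Finset.coe_singleton]
    haveI : Nonempty ({v} : Set V) := ⟨⟨v, rfl⟩⟩
    refine Connected.mk fun a b => ?_
    have hab : a = b := Subtype.ext (a.2.trans b.2.symm)
    exact hab ▸ Reachable.refl a
  obtain ⟨S, D, hind, hSD, hconn, hdom, hcard⟩ :=
    grow_aux G hG (Fintype.card V) {v} {v} (by simp)
      (by rw [Finset.coe_singleton]; exact Set.pairwise_singleton _ _)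
      (subset_refl _) hsing (by simp)
  have hSle : S.card ≤ _root_.indepNum G :=
    le_csSup ⟨Fintype.card V, by rintro n ⟨s, -, rfl⟩; exact s.card_le_univ⟩ ⟨S, hind, rfl⟩
  have hγ : connDomNum G ≤ D.card := Nat.sInf_le ⟨D, hconn, hdom, rfl⟩
  refine ⟨⟨S, D, hind, hSD, hconn, hdom, by omega⟩, ?_⟩
  have h2 : connDomNum G + 1 ≤ 2 * _root_.indepNum G := by omega
  rw [div_le_iff₀ (by norm_num : (0:ℝ) < 2)]
  have := (Nat.cast_le (α := ℝ)).mpr h2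
  push_cast at this
  linarith
end
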